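/- Cycle lemma for B frequencies (even type): let n ≥ 1, B ≥ 1, let σ ∈ S_n have m(σ) cycles, and let ω_0, …, ω_{B−1} : ℕ → ℝ be sequences such that ω_j(t) → ∞ for every j and |ω_j(t) − ω_k(t)| → ∞ for all j ≠ k, as t → ∞. Then for every bounded measurable f : ℝⁿ → ℝ with compact support, lim_{t → ∞} ∫_{ℝⁿ} ( ∏_{i=1}^n (1/B) ∑_{j=0}^{B−1} cos(ω_j(t)(x_{σ(i)} − x_i)) ) f(x) dx = (1/(2B))^{n − m(σ)} ∫_{ℝⁿ} f(x) dx. -/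

import Mathlib

open Filter MeasureTheory

/-- The setoid on `Fin n` whose classes are the cycles (orbits) of a permutation `σ`,
counting fixed points as singleton orbits. -/
def sameCycleSetoid {n : ℕ} (σ : Equiv.Perm (Fin n)) : Setoid (Fin n) :=
  ⟨σ.SameCycle, ⟨fun x => Equiv.Perm.SameCycle.refl σ x,
    fun h => h.symm, fun h h' => h.trans h'⟩⟩

/-- `cycleCount σ` is the number of cycles `m(σ)` of the permutation `σ`. -/
noncomputable def cycleCount {n : ℕ} (σ : Equiv.Perm (Fin n)) : ℕ :=
  Nat.card (Quotient (sameCycleSetoid σ))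

/-!
Writing `cos θ = (e^{iθ} + e^{-iθ}) / 2`, each factor is the mean of
`e^{i c_q(t) (x_{σ i} - x_i)}` over the `2B` signed frequencies `c_q = ±ω_j`, so the integrand
expands into a sum over colourings `p : Fin n → {±ω_j}` of plane waves `e^{i ⟨a_p(t), x⟩}` with
`a_p(t)_k = c_{p(σ⁻¹ k)}(t) - c_{p k}(t)`.
If `p` is constant on the cycles of `σ` then `a_p = 0` and the term is `∫ f`. Otherwise some
coordinate of `a_p(t)` is the difference of two distinct signed frequencies, which diverges, and the
term tends to `0` by the Riemann–Lebesgue lemma. There are `(2B)^{m(σ)}` colourings constant on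
cycles.
-/

open Topology Real Equiv

theorem HasCompactSupport.integrable_of_bound {α E : Type*} [MeasurableSpace α]
    [TopologicalSpace α] [OpensMeasurableSpace α] [NormedAddCommGroup E] {μ : Measure α}
    [IsFiniteMeasureOnCompacts μ] {f : α → E} (hsupp : HasCompactSupport f)
    (hf : AEStronglyMeasurable f μ) {C : ℝ} (hC : ∀ x, ‖f x‖ ≤ C) : Integrable f μ :=
  (integrableOn_iff_integrable_of_support_subset (subset_tsupport f)).1 <|
    Measure.integrableOn_of_bounded hsupp.measure_lt_top.ne hf (ae_of_all _ hC)

theorem Equiv.Perm.apply_pow_apply_eq {α β : Type*} {σ : Perm α} {p : α → β}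
    (hp : ∀ i, p (σ i) = p i) (k : ℕ) (i : α) : p ((σ ^ k) i) = p i := by
  induction k with
  | zero => rfl
  | succ k ih => rw [pow_succ', Perm.mul_apply, hp, ih]

theorem Equiv.Perm.forall_apply_eq_iff_sameCycle {α β : Type*} [Finite α] {σ : Perm α}
    {p : α → β} : (∀ i, p (σ i) = p i) ↔ ∀ i j, σ.SameCycle i j → p i = p j := by
  refine ⟨fun hp i j hij => ?_, fun hp i => hp _ _ (Perm.SameCycle.refl σ i).apply_left⟩
  obtain ⟨k, rfl⟩ := hij.exists_nat_pow_eq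
  exact (σ.apply_pow_apply_eq hp k i).symm

theorem card_invariant_fun_eq_pow_cycleCount {n : ℕ} (σ : Perm (Fin n)) (Q : Type*) :
    Nat.card {p : Fin n → Q // ∀ i, p (σ i) = p i} = Nat.card Q ^ cycleCount σ := by
  rw [Nat.card_congr ((Equiv.subtypeEquivRight fun p => Perm.forall_apply_eq_iff_sameCycle).trans
    (Setoid.liftEquiv (sameCycleSetoid σ))), Nat.card_fun, cycleCount]

theorem cycleCount_le {n : ℕ} (σ : Perm (Fin n)) : cycleCount σ ≤ n := by
  simpa [cycleCount] using
    Nat.card_le_card_of_surjective _ (Quotient.mk_surjective (s := sameCycleSetoid σ))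

theorem tendsto_integral_exp_dotProduct_smul {ι E : Type*} [Fintype ι]
    [NormedAddCommGroup E] [NormedSpace ℂ E] (f : (ι → ℝ) → E) :
    Tendsto (fun a : ι → ℝ => ∫ x, Complex.exp ((a ⬝ᵥ x : ℝ) * Complex.I) • f x)
      (cocompact (ι → ℝ)) (𝓝 0) := by
  classical
  let D : (ι → ℝ) ≃L[ℝ] StrongDual ℝ (ι → ℝ) :=
    ((dotProductEquiv ℝ ι).trans LinearMap.toContinuousLinearMap).toContinuousLinearEquiv
  -- `𝐞 (-w x) = exp (i a ⬝ᵥ x)` for the functional `w = -(2π)⁻¹ • (a ⬝ᵥ ·)`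
  have hπ : -(2 * π)⁻¹ ≠ 0 := by simp [pi_ne_zero]
  let W : (ι → ℝ) ≃ₜ StrongDual ℝ (ι → ℝ) :=
    D.toHomeomorph.trans (Homeomorph.smulOfNeZero _ hπ)
  refine ((tendsto_integral_exp_smul_cocompact f volume).comp
    W.toCocompactMap.cocompact_tendsto').congr fun a => integral_congr_ae
      (ae_of_all _ fun x => ?_)
  simp only [Circle.smul_def, fourierChar_apply]
  congr 2
  simp [W, D]
  field_simp

theorem Equiv.Perm.sum_mul_apply_sub_eq_dotProduct {ι : Type*} [Fintype ι] (σ : Perm ι)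
    (v x : ι → ℝ) :
    ∑ i, v i * (x (σ i) - x i) = (fun k => v (σ.symm k) - v k) ⬝ᵥ x := by
  simp only [dotProduct, sub_mul, mul_sub, Finset.sum_sub_distrib]
  congr 1
  rw [← Equiv.sum_comp σ (fun k => v (σ.symm k) * x k)]
  simp

theorem prod_sum_exp_eq_sum_exp_dotProduct {ι Q : Type*} [Fintype ι] [DecidableEq ι]
    [Fintype Q] (σ : Perm ι) (c : Q → ℝ) (x : ι → ℝ) :
    ∏ i, ∑ q, Complex.exp ((c q * (x (σ i) - x i) : ℝ) * Complex.I) =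
      ∑ p : ι → Q, Complex.exp
        (((fun k => c (p (σ.symm k)) - c (p k)) ⬝ᵥ x : ℝ) * Complex.I) := by
  rw [Finset.prod_univ_sum, Fintype.piFinset_univ]
  refine Finset.sum_congr rfl fun p _ => ?_
  rw [← Complex.exp_sum, ← Finset.sum_mul, ← Complex.ofReal_sum,
    σ.sum_mul_apply_sub_eq_dotProduct (fun i => c (p i))]

theorem tendsto_comp_symm_sub_cocompact {ι Q α : Type*} [Fintype ι] {l : Filter α}
    {c : Q → α → ℝ}
    (hsep : ∀ q q', q ≠ q' → Tendsto (fun t => |c q t - c q' t|) l atTop)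
    (σ : Perm ι) {p : ι → Q} (hp : ¬ ∀ i, p (σ i) = p i) :
    Tendsto (fun t k => c (p (σ.symm k)) t - c (p k) t) l (cocompact (ι → ℝ)) := by
  push Not at hp
  obtain ⟨i, hi⟩ := hp
  rw [← Metric.cobounded_eq_cocompact, ← tendsto_norm_atTop_iff_cobounded]
  refine tendsto_atTop_mono (fun t => ?_) (hsep _ _ hi.symm)
  simpa using norm_le_pi_norm (fun k => c (p (σ.symm k)) t - c (p k) t) (σ i)

theorem integrable_exp_dotProduct_mul {ι : Type*} [Fintype ι] {f : (ι → ℝ) → ℂ}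
    (hf : Integrable f) (a : ι → ℝ) :
    Integrable (fun x => Complex.exp ((a ⬝ᵥ x : ℝ) * Complex.I) * f x) :=
  hf.bdd_mul (c := 1) (by fun_prop) (ae_of_all _ fun x => (Complex.norm_exp_ofReal_mul_I _).le)

theorem tendsto_integral_prod_sum_exp_mul {ι Q α : Type*} [Fintype ι] [DecidableEq ι]
    [Fintype Q] {l : Filter α} {c : Q → α → ℝ}
    (hsep : ∀ q q', q ≠ q' → Tendsto (fun t => |c q t - c q' t|) l atTop)
    (σ : Perm ι) {f : (ι → ℝ) → ℂ} (hf : Integrable f) :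
    Tendsto (fun t => ∫ x,
        (∏ i, ∑ q, Complex.exp ((c q t * (x (σ i) - x i) : ℝ) * Complex.I)) * f x) l
      (𝓝 (Nat.card {p : ι → Q // ∀ i, p (σ i) = p i} * ∫ x, f x)) := by
  classical
  have hterm : ∀ p : ι → Q, Tendsto (fun t => ∫ x, Complex.exp
      (((fun k => c (p (σ.symm k)) t - c (p k) t) ⬝ᵥ x : ℝ) * Complex.I) * f x) l
      (𝓝 (if ∀ i, p (σ i) = p i then ∫ x, f x else 0)) := by
    intro p
    split_ifs with hp
    · have hzero : ∀ t, (fun k => c (p (σ.symm k)) t - c (p k) t) = 0 := fun t => by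
        ext k
        simpa [sub_eq_zero] using congrArg (c · t) (hp (σ.symm k)).symm
      simpa [hzero] using tendsto_const_nhds
    · exact (tendsto_integral_exp_dotProduct_smul f).comp
        (tendsto_comp_symm_sub_cocompact hsep σ hp)
  have hsplit : ∀ t, ∫ x,
      (∏ i, ∑ q, Complex.exp ((c q t * (x (σ i) - x i) : ℝ) * Complex.I)) * f x =
      ∑ p : ι → Q, ∫ x, Complex.exp
        (((fun k => c (p (σ.symm k)) t - c (p k) t) ⬝ᵥ x : ℝ) * Complex.I) * f x := by
    intro t
    simp_rw [prod_sum_exp_eq_sum_exp_dotProduct σ (c · t), Finset.sum_mul]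
    exact integral_finsetSum _ fun p _ => integrable_exp_dotProduct_mul hf _
  simp_rw [hsplit]
  convert tendsto_finsetSum Finset.univ fun p _ => hterm p
  simp [Finset.sum_ite, Fintype.card_subtype, Nat.card_eq_fintype_card]

theorem Complex.exp_ofReal_mul_I_add_exp_neg (x : ℝ) :
    Complex.exp (x * Complex.I) + Complex.exp ((-x : ℝ) * Complex.I) =
      2 * (Real.cos x : ℂ) := by
  rw [Complex.ofReal_cos, Complex.cos]
  push_cast
  ring_nf

theorem sum_sumElim_neg_exp_eq_two_mul_sum_cos {Q α : Type*} [Fintype Q] (ω : Q → α → ℝ)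
    (t : α) (y : ℝ) :
    ∑ q, Complex.exp ((Sum.elim ω (-ω) q t * y : ℝ) * Complex.I) =
      2 * ((∑ j, Real.cos (ω j t * y) : ℝ) : ℂ) := by
  simp only [Fintype.sum_sum_type, Sum.elim_inl, Sum.elim_inr, Pi.neg_apply, neg_mul,
    ← Finset.sum_add_distrib, Complex.exp_ofReal_mul_I_add_exp_neg, Complex.ofReal_sum,
    Finset.mul_sum]

theorem tendsto_abs_sub_sumElim_neg {Q α : Type*} {l : Filter α} {ω : Q → α → ℝ}
    (hω : ∀ j, Tendsto (ω j) l atTop)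
    (hsep : ∀ j k, j ≠ k → Tendsto (fun t => |ω j t - ω k t|) l atTop) (q q' : Q ⊕ Q)
    (hqq' : q ≠ q') :
    Tendsto (fun t => |Sum.elim ω (-ω) q t - Sum.elim ω (-ω) q' t|) l atTop := by
  have hsum : ∀ j k, Tendsto (fun t => |ω j t + ω k t|) l atTop := fun j k =>
    tendsto_atTop_mono (fun t => le_abs_self _) ((hω j).atTop_add_atTop (hω k))
  rcases q with j | j <;> rcases q' with k | k
  · exact hsep j k fun h => hqq' (congrArg Sum.inl h)
  · simpa using hsum j k
  · simpa [← abs_neg (-ω j _ - _), add_comm] using hsum j k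
  · simpa [abs_sub_comm, neg_add_eq_sub] using hsep j k fun h => hqq' (congrArg Sum.inr h)

theorem ofReal_prod_mean_cos_eq {ι Q α : Type*} [Fintype ι] [Fintype Q] (ω : Q → α → ℝ)
    (t : α) (y : ι → ℝ) (B : ℝ) :
    ((∏ i, 1 / B * ∑ j, Real.cos (ω j t * y i) : ℝ) : ℂ) =
      (((1 / (2 * B)) ^ Fintype.card ι : ℝ) : ℂ) *
        ∏ i, ∑ q, Complex.exp ((Sum.elim ω (-ω) q t * y i : ℝ) * Complex.I) := by
  rw [Complex.ofReal_pow, ← Finset.card_univ, ← Finset.prod_const, Complex.ofReal_prod,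
    ← Finset.prod_mul_distrib]
  refine Finset.prod_congr rfl fun i _ => ?_
  rw [sum_sumElim_neg_exp_eq_two_mul_sum_cos]
  push_cast
  ring

theorem cycle_lemma_even_type_general (n B : ℕ) (hB : 1 ≤ B)
    (σ : Equiv.Perm (Fin n)) (ω : Fin B → ℕ → ℝ)
    (hω : ∀ j, Tendsto (ω j) atTop atTop)
    (hsep : ∀ j k, j ≠ k → Tendsto (fun t => |ω j t - ω k t|) atTop atTop)
    (f : (Fin n → ℝ) → ℝ) (hmeas : Measurable f) (hbd : ∃ C : ℝ, ∀ x, |f x| ≤ C)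
    (hsupp : HasCompactSupport f) :
    Tendsto (fun t : ℕ =>
        ∫ x : Fin n → ℝ,
          (∏ i, (1 / (B : ℝ)) * ∑ j : Fin B, Real.cos (ω j t * (x (σ i) - x i))) * f x)
      atTop
      (nhds ((1 / (2 * (B : ℝ))) ^ (n - cycleCount σ) * ∫ x : Fin n → ℝ, f x)) := by
  obtain ⟨C, hC⟩ := hbd
  have hf : Integrable f := hsupp.integrable_of_bound hmeas.aestronglyMeasurable (C := C) hC
  have hlim := (tendsto_integral_prod_sum_exp_mul (tendsto_abs_sub_sumElim_neg hω hsep) σ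
    (f := fun x => (f x : ℂ)) hf.ofReal).const_mul (((1 / (2 * B) : ℝ) ^ n : ℝ) : ℂ)
  rw [card_invariant_fun_eq_pow_cycleCount, Nat.card_sum, Nat.card_eq_fintype_card,
    Fintype.card_fin, integral_complex_ofReal, ← mul_assoc] at hlim
  have hpow : (1 / (2 * B : ℝ)) ^ (n - cycleCount σ) =
      (1 / (2 * B)) ^ n * (2 * B) ^ cycleCount σ := by
    rw [pow_sub₀ _ (by positivity) (cycleCount_le σ)]
    simp only [one_div, inv_pow, inv_inv]
  rw [← tendsto_ofReal_iff]
  convert hlim using 2 with t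
  · rw [← integral_complex_ofReal, ← integral_const_mul]
    congr 1 with x
    rw [Complex.ofReal_mul, ofReal_prod_mean_cos_eq, Fintype.card_fin, mul_assoc]
  · rw [hpow]
    push_cast
    ring

/-- Cycle lemma for `B` frequencies (even type): if `ω_j(t) → ∞` and `|ω_j(t) − ω_k(t)| → ∞`
for `j ≠ k`, then for bounded, measurable, compactly supported `f`,
`∫ (∏ i (1/B) ∑_j cos(ω_j(t)(x_{σ(i)} − x_i))) f(x) dx → (1/(2B))^(n − m(σ)) ∫ f(x) dx`. -/
theorem cycle_lemma_even_type (n B : ℕ) (hn : 1 ≤ n) (hB : 1 ≤ B)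
    (σ : Equiv.Perm (Fin n)) (ω : Fin B → ℕ → ℝ)
    (hω : ∀ j, Tendsto (ω j) atTop atTop)
    (hsep : ∀ j k, j ≠ k → Tendsto (fun t => |ω j t - ω k t|) atTop atTop)
    (f : (Fin n → ℝ) → ℝ) (hmeas : Measurable f) (hbd : ∃ C : ℝ, ∀ x, |f x| ≤ C)
    (hsupp : HasCompactSupport f) :
    Tendsto (fun t : ℕ =>
        ∫ x : Fin n → ℝ,
          (∏ i, (1 / (B : ℝ)) * ∑ j : Fin B, Real.cos (ω j t * (x (σ i) - x i))) * f x)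
      atTop
      (nhds ((1 / (2 * (B : ℝ))) ^ (n - cycleCount σ) * ∫ x : Fin n → ℝ, f x)) :=
  cycle_lemma_even_type_general n B hB σ ω hω hsep f hmeas hbd hsupp
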